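/- arXiv:1305.2548 — 3 statements merged into one kernel-verified Lean document; each statement's English description precedes it below -/
import Mathlib

section
/- Let T be a tree with node set {1, ..., K}, and for each node i let C_i be a finite set, such that the running intersection property holds: for nodes i, j and any k on the path from i to j in T, C_i ∩ C_j ⊆ C_k. Let M be a finite set, and suppose probability mass functions q_i on M^{C_i} are consistent: for every edge (i,l) of T, the marginals of q_i and q_l on M^{C_i ∩ C_l} coincide. Then there exists a probability mass function q on M^{∪_i C_i} whose marginal on M^{C_i} equals q_i for every i. -/
/-!
Grow a set `P` of bags, connected in `T`, on which the joint mass function `Q` already has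
the prescribed marginals, one neighbour `ℓ` of `P` at a time, with `p ∈ P` adjacent to `ℓ`.
Every path from `ℓ` into `P` passes through `p`, so by the running intersection property
`C ℓ` meets every bag of `P` inside `S = C ℓ ∩ C p`, and on `S` the marginal of `Q` is the
common marginal of `q p` and `q ℓ`. Gluing the marginal of `Q` off `C ℓ \ S` with `q ℓ`,
conditionally independent given the coordinates in `S`, gives the marginal `q ℓ` on `C ℓ` and
leaves the marginal on every bag of `P` unchanged.
-/

open Finset

section massMap
variable {X Y Z : Type*} [Fintype X] [DecidableEq Y] [DecidableEq Z]

-- Marginals are `massMap` along `Finset.restrict` and `Finset.restrict₂`.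
def massMap (π : X → Y) (Q : X → ℝ) (y : Y) : ℝ :=
  ∑ x, if π x = y then Q x else 0

lemma massMap_precomp_apply {α β M : Type*} [Fintype α] [Fintype β] [DecidableEq β]
    [Fintype M] [DecidableEq M] [DecidableEq α] (f : β → α) (Q : (α → M) → ℝ) (b : β → M) :
    massMap (· ∘ f) Q b = ∑ m, if ∀ x, m (f x) = b x then Q m else 0 :=
  sum_congr rfl fun _ _ => if_congr funext_iff rfl rfl

lemma massMap_nonneg {π : X → Y} {Q : X → ℝ} (hQ : ∀ x, 0 ≤ Q x) (y : Y) :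
    0 ≤ massMap π Q y :=
  sum_nonneg fun x _ => by split_ifs <;> simp [hQ x]

lemma le_massMap (π : X → Y) {Q : X → ℝ} (hQ : ∀ x, 0 ≤ Q x) (x : X) :
    Q x ≤ massMap π Q (π x) := by
  have := single_le_sum (f := fun x' => if π x' = π x then Q x' else 0)
    (fun x' _ => by split_ifs <;> simp [hQ x']) (mem_univ x)
  simpa [massMap] using this

lemma sum_massMap [Fintype Y] (π : X → Y) (Q : X → ℝ) : ∑ y, massMap π Q y = ∑ x, Q x := by
  simp only [massMap]
  rw [sum_comm]
  simp

lemma massMap_massMap [Fintype Y] (f : X → Y) (g : Y → Z) (Q : X → ℝ) :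
    massMap g (massMap f Q) = massMap (g ∘ f) Q := by
  funext z
  simp only [massMap, ← sum_filter]
  rw [sum_fiberwise_eq_sum_filter]
  simp

lemma massMap_comp_equiv {X' : Type*} [Fintype X'] (e : X' ≃ X) (f : X → Y) (Q : X → ℝ) :
    massMap (f ∘ e) (Q ∘ e) = massMap f Q :=
  funext fun y => e.sum_comp fun x => if f x = y then Q x else 0

lemma massMap_apply_of_injective {π : X → Y} (hπ : π.Injective) (Q : X → ℝ) (x : X) :
    massMap π Q (π x) = Q x := by
  rw [massMap, sum_eq_single x (fun y _ hy => if_neg (hπ.ne hy)) (by simp), if_pos rfl]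

lemma massMap_injective {π : X → Y} (hπ : π.Injective) : (massMap π).Injective :=
  fun P Q h => funext fun x => by
    rw [← massMap_apply_of_injective hπ P, h, massMap_apply_of_injective hπ]

lemma massMap_of_subsingleton [Subsingleton Y] (π : X → Y) (Q : X → ℝ) (y : Y) :
    massMap π Q y = ∑ x, Q x := by
  simp [massMap, Subsingleton.elim _ y]

lemma massMap_snd_apply {α γ : Type*} [Fintype α] [Fintype γ] [DecidableEq γ]
    (H : α × γ → ℝ) (c : γ) : massMap Prod.snd H c = ∑ a, H (a, c) := by
  simp [massMap, Fintype.sum_prod_type]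

lemma exists_coupling {α β γ : Type*} [Fintype α] [Fintype β] [Fintype γ] [DecidableEq α]
    [DecidableEq β] [DecidableEq γ] (σ : β → γ) {G : β → ℝ} {H : α × γ → ℝ}
    (hG : ∀ b, 0 ≤ G b) (hH : ∀ x, 0 ≤ H x) (h : massMap σ G = massMap Prod.snd H) :
    ∃ Q : α × β → ℝ, (∀ x, 0 ≤ Q x) ∧ massMap (Prod.map id σ) Q = H ∧
      massMap Prod.snd Q = G := by
  set Z := massMap σ G
  -- Where `Z c = 0`, `G` vanishes on `σ ⁻¹' {c}` and `H` on `α × {c}`, so `x / 0 = 0` is harmless.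
  have hG0 : ∀ b, Z (σ b) = 0 → G b = 0 := fun b hb =>
    le_antisymm (hb ▸ le_massMap σ hG b) (hG b)
  have hH0 : ∀ a c, Z c = 0 → H (a, c) = 0 := fun a c hc =>
    le_antisymm (hc ▸ h ▸ le_massMap Prod.snd hH (a, c)) (hH _)
  refine ⟨fun x => G x.2 * H (x.1, σ x.2) / Z (σ x.2),
    fun x => div_nonneg (mul_nonneg (hG _) (hH _)) (massMap_nonneg hG _), ?_, ?_⟩
  · funext ⟨a, c⟩
    simp only [massMap, Fintype.sum_prod_type, Prod.map, id, Prod.mk.injEq, ite_and,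
      sum_ite_irrel, sum_const_zero, sum_ite_eq', mem_univ, ↓reduceIte]
    calc _ = ∑ b, (if σ b = c then G b else 0) * (H (a, c) / Z c) :=
          sum_congr rfl fun b _ => by split_ifs with hb <;> simp [hb, mul_div_assoc]
      _ = Z c * (H (a, c) / Z c) := by rw [← sum_mul]; rfl
      _ = H (a, c) := mul_div_cancel_of_imp' (hH0 a c)
  · funext b
    rw [massMap_snd_apply]
    dsimp only
    rw [← sum_div, ← mul_sum, ← massMap_snd_apply, ← h]
    exact mul_div_cancel_of_imp (hG0 b)

end massMap

section bags
variable {V M : Type*} [Fintype V] [DecidableEq V] [Fintype M] [DecidableEq M]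

lemma exists_update_marginal {Q : (V → M) → ℝ} (hQ : ∀ m, 0 ≤ Q m) {D S : Finset V}
    (hSD : S ⊆ D) {qD : (D → M) → ℝ} (hqD : ∀ d, 0 ≤ qD d)
    (hmatch : massMap (restrict S) Q = massMap (restrict₂ (π := fun _ => M) hSD) qD) :
    ∃ Q' : (V → M) → ℝ, (∀ m, 0 ≤ Q' m) ∧ massMap (restrict D) Q' = qD ∧
      ∀ E : Finset V, E ∩ D ⊆ S → massMap (restrict E) Q' = massMap (restrict E) Q := by
  -- Split `V → M` as `(B → M) × (Bᶜ → M)` and couple the marginal of `Q` on `Bᶜ` with `qD`,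
  -- read as a mass function on `(B → M) × (S → M)`, along their common marginal on `S`.
  set B := D \ S
  have hSB : ∀ v ∈ S, v ∉ B := fun v hv hvB => (mem_sdiff.1 hvB).2 hv
  let e := Equiv.piEquivPiSubtypeProd (· ∈ B) (fun _ : V => M)
  let resW : (V → M) → ({v // v ∉ B} → M) := fun m w => m w
  let σ : ({v // v ∉ B} → M) → (S → M) := fun w s => w ⟨s, hSB s s.2⟩
  let ψ : (D → M) → (B → M) × (S → M) := fun d =>
    (restrict₂ (π := fun _ => M) sdiff_subset d, restrict₂ (π := fun _ => M) hSD d)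
  have hψ : ψ.Injective := by
    intro d d' h
    simp only [ψ, Prod.mk.injEq] at h
    funext v
    by_cases hv : (v : V) ∈ S
    · exact congrFun h.2 ⟨v, hv⟩
    · exact congrFun h.1 ⟨v, mem_sdiff.2 ⟨v.2, hv⟩⟩
  obtain ⟨Q₂, hQ₂, hQ₂D, hQ₂W⟩ := exists_coupling σ (G := massMap resW Q) (H := massMap ψ qD)
    (massMap_nonneg hQ) (massMap_nonneg hqD)
    (by rw [massMap_massMap, massMap_massMap]; exact hmatch)
  refine ⟨Q₂ ∘ e, fun m => hQ₂ _, massMap_injective hψ ?_, fun E hE => ?_⟩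
  · rw [massMap_massMap, ← hQ₂D, ← massMap_comp_equiv e]
    rfl
  · have hEB : ∀ v ∈ E, v ∉ B := fun v hv hvB =>
      (mem_sdiff.1 hvB).2 (hE (mem_inter.2 ⟨hv, (mem_sdiff.1 hvB).1⟩))
    let τ : ({v // v ∉ B} → M) → (E → M) := fun w x => w ⟨x, hEB x x.2⟩
    calc massMap (restrict E) (Q₂ ∘ e) = massMap ((τ ∘ Prod.snd) ∘ e) (Q₂ ∘ e) := rfl
      _ = massMap (restrict E) Q := by
        rw [massMap_comp_equiv, ← massMap_massMap, hQ₂W, massMap_massMap]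
        rfl

end bags

namespace SimpleGraph
variable {ι : Type*} {T : SimpleGraph ι}

lemma Connected.exists_adj_notMem_mem (hT : T.Connected) {s : Set ι} {x y : ι} (hx : x ∉ s)
    (hy : y ∈ s) : ∃ ℓ ∉ s, ∃ p ∈ s, T.Adj ℓ p := by
  obtain ⟨d, -, hd, hd'⟩ := (hT.preconnected y x).some.exists_boundary_dart s hy hx
  exact ⟨d.snd, hd', d.fst, hd, d.adj.symm⟩

lemma exists_isPath_mem_support_of_adj [DecidableEq ι] {s : Set ι}
    (hs : (T.induce s).Preconnected) {ℓ p x : ι} (hℓ : ℓ ∉ s) (hp : p ∈ s) (hx : x ∈ s)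
    (h : T.Adj ℓ p) : ∃ w : T.Walk ℓ x, w.IsPath ∧ p ∈ w.support := by
  obtain ⟨w⟩ := hs ⟨p, hp⟩ ⟨x, hx⟩
  let w' : T.Walk p x := w.map (Embedding.induce s).toHom
  have hℓw' : ℓ ∉ w'.bypass.support := fun hmem => by
    obtain ⟨v, -, rfl⟩ :=
      List.mem_map.1 (Walk.support_map _ w ▸ w'.support_bypass_subset_support hmem)
    exact hℓ v.2
  exact ⟨.cons h w'.bypass, w'.bypass_isPath.cons hℓw', by simp⟩

end SimpleGraph

section tree
open SimpleGraph
variable {ι V M : Type*} [Fintype ι] [DecidableEq ι] [Fintype V] [DecidableEq V] [Fintype M]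
  [DecidableEq M] {T : SimpleGraph ι} {C : ι → Finset V} {q : ∀ i, (C i → M) → ℝ}

lemma exists_marginals_of_connected_induce (hT : T.Connected)
    (hRIP : ∀ (i j k : ι) (p : T.Walk i j), p.IsPath → k ∈ p.support → C i ∩ C j ⊆ C k)
    (hq0 : ∀ i m, 0 ≤ q i m)
    (hcons : ∀ i l, T.Adj i l → massMap (restrict₂ (π := fun _ => M) inter_subset_left) (q i) =
      massMap (restrict₂ (π := fun _ => M) inter_subset_right) (q l))
    (P : Finset ι) (hP : (T.induce P).Connected) {Q : (V → M) → ℝ} (hQ0 : ∀ m, 0 ≤ Q m)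
    (hQ : ∀ i ∈ P, massMap (restrict (C i)) Q = q i) :
    ∃ Q' : (V → M) → ℝ, (∀ m, 0 ≤ Q' m) ∧ ∀ i, massMap (restrict (C i)) Q' = q i := by
  by_cases hall : ∀ i, i ∈ P
  · exact ⟨Q, hQ0, fun i => hQ i (hall i)⟩
  obtain ⟨x, hx⟩ := not_forall.1 hall
  obtain ⟨⟨y, hy⟩⟩ := hP.nonempty
  obtain ⟨ℓ, hℓ, p, hp, hadj⟩ := hT.exists_adj_notMem_mem (s := P) hx hy
  have hsep : ∀ i ∈ P, C i ∩ C ℓ ⊆ C ℓ ∩ C p := fun i hi v hv => by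
    obtain ⟨w, hw, hpw⟩ := exists_isPath_mem_support_of_adj hP.preconnected hℓ hp hi hadj
    rw [inter_comm] at hv
    exact mem_inter.2 ⟨(mem_inter.1 hv).1, hRIP ℓ i p w hw hpw hv⟩
  obtain ⟨Q', hQ'0, hQ'ℓ, hQ'P⟩ := exists_update_marginal hQ0 inter_subset_left (hq0 ℓ)
    (by rw [hcons ℓ p hadj, ← hQ p hp, massMap_massMap]; rfl)
  have hP' : (T.induce (insert ℓ P : Finset ι)).Connected := by
    rw [coe_insert, Set.insert_eq]
    exact connected_induce_union (by simp) hP.preconnected rfl hp hadj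
  exact exists_marginals_of_connected_induce hT hRIP hq0 hcons (insert ℓ P) hP' hQ'0
    fun i hi => (mem_insert.1 hi).elim (· ▸ hQ'ℓ) fun hi => (hQ'P _ (hsep i hi)).trans (hQ i hi)
termination_by (univ \ P).card
decreasing_by
  rw [sdiff_insert]
  exact card_erase_lt_of_mem (mem_sdiff.2 ⟨mem_univ ℓ, hℓ⟩)

end tree

/-- consistent local pmfs on the bags of a tree with the running
intersection property extend to a joint pmf with the prescribed marginals. -/
theorem stmt9 {K : ℕ} (T : SimpleGraph (Fin K)) (hT : T.IsTree)
    {V M : Type*} [Fintype V] [DecidableEq V] [Fintype M] [DecidableEq M]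
    (C : Fin K → Finset V) (hcover : ∀ v, ∃ i, v ∈ C i)
    (hRIP : ∀ (i j k : Fin K) (p : T.Walk i j), p.IsPath → k ∈ p.support →
      C i ∩ C j ⊆ C k)
    (q : ∀ i, ({v // v ∈ C i} → M) → ℝ)
    (hq0 : ∀ i m, 0 ≤ q i m) (hq1 : ∀ i, ∑ m, q i m = 1)
    (hcons : ∀ i l, T.Adj i l → ∀ g : {v // v ∈ C i ∩ C l} → M,
      (∑ m : {v // v ∈ C i} → M,
        if (∀ v : {v // v ∈ C i ∩ C l}, m ⟨v.1, (Finset.mem_inter.mp v.2).1⟩ = g v)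
        then q i m else 0) =
      (∑ m : {v // v ∈ C l} → M,
        if (∀ v : {v // v ∈ C i ∩ C l}, m ⟨v.1, (Finset.mem_inter.mp v.2).2⟩ = g v)
        then q l m else 0)) :
    ∃ Q : (V → M) → ℝ, (∀ m, 0 ≤ Q m) ∧ (∑ m, Q m = 1) ∧
      ∀ i (m' : {v // v ∈ C i} → M),
        (∑ m : V → M, if (∀ v : {v // v ∈ C i}, m v.1 = m' v) then Q m else 0) =
          q i m' := by
  have hne (i : Fin K) : Nonempty (C i → M) :=
    univ_nonempty_iff.1 (nonempty_of_sum_ne_zero ((hq1 i).symm ▸ one_ne_zero))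
  choose bag hbag using hcover
  let m₀ : V → M := fun v => (hne (bag v)).some ⟨v, hbag v⟩
  let Q₀ : (V → M) → ℝ := fun m => if m = m₀ then 1 else 0
  have hQ₀ : ∑ m, Q₀ m = 1 := by simp [Q₀]
  obtain ⟨i₀⟩ := hT.connected.nonempty
  have hi₀ : (T.induce ({i₀} : Finset (Fin K))).Connected := by
    rw [coe_singleton, SimpleGraph.induce_singleton_eq_top]
    exact SimpleGraph.connected_top
  obtain ⟨Q₁, hQ₁, hQ₁i₀, -⟩ := exists_update_marginal (Q := Q₀)
    (fun m => by unfold Q₀; split_ifs <;> norm_num) (empty_subset _)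
    (hq0 i₀) (funext fun _ => by rw [massMap_of_subsingleton, massMap_of_subsingleton, hQ₀, hq1])
  obtain ⟨Q, hQ, hQC⟩ := exists_marginals_of_connected_induce hT.connected hRIP hq0
    (fun i l hil => funext fun g => (massMap_precomp_apply _ _ _).trans
      ((hcons i l hil g).trans (massMap_precomp_apply _ _ _).symm))
    {i₀} hi₀ hQ₁ (by simpa using hQ₁i₀)
  refine ⟨Q, hQ, ?_, fun i m' => ?_⟩
  · rw [← sum_massMap (restrict (C i₀)), hQC, hq1]
  · rw [← hQC i]
    exact (massMap_precomp_apply _ _ _).symm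
end

section
/- Let V be a finite set with a linear map structure: for each pair (A, B) of disjoint subsets of V, let Λ_{A,B} be the linear map over F_p obtained from block matrices G_{uv} (for edges (u,v) ∈ E) mapping ⊕_{u∈A} F_p^k → ⊕_{v∈B} F_p^k. Then the function f(Ω) = rank of the submatrix of a fixed matrix Λ with rows indexed by coordinates in Ω^c-blocks and columns indexed by coordinates in Ω-blocks is submodular in Ω ⊆ V. -/
open Submodule Module Matrix

private lemma stmt14_finrank_map_ker {F M N : Type*} [Field F] [AddCommGroup M] [Module F M]
    [AddCommGroup N] [Module F N] [FiniteDimensional F M]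
    (L : M →ₗ[F] N) (U : Submodule F M) (h : LinearMap.ker L ≤ U) :
    Module.finrank F (U.map L) + Module.finrank F (LinearMap.ker L) = Module.finrank F U := by
  have h1 := LinearMap.finrank_range_add_finrank_ker (L.domRestrict U)
  rw [LinearMap.range_domRestrict] at h1
  rw [← h1]
  congr 1
  have : LinearMap.ker (L.domRestrict U) = Submodule.comap U.subtype (LinearMap.ker L) := by
    ext x; simp [LinearMap.mem_ker]
  rw [this]
  exact ((Submodule.comapSubtypeEquivOfLe h).finrank_eq).symm

set_option maxHeartbeats 2000000 in
/-- matrix cut-rank submodularity: for a fixed matrix M with rows and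
columns labeled by nodes of V, the function
f(Ω) = rank(M[rows labeled outside Ω, columns labeled inside Ω]) is submodular. -/
theorem stmt14 {F : Type*} [Field F] {V R C : Type*}
    [Fintype R] [Fintype C] [DecidableEq V] [DecidableEq R] [DecidableEq C]
    (M : Matrix R C F) (rV : R → V) (cV : C → V) :
    ∀ A B : Finset V,
      Matrix.rank (M.submatrix (fun r : {r // rV r ∉ A ∪ B} => r.1)
          (fun c : {c // cV c ∈ A ∪ B} => c.1)) +
        Matrix.rank (M.submatrix (fun r : {r // rV r ∉ A ∩ B} => r.1)
          (fun c : {c // cV c ∈ A ∩ B} => c.1)) ≤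
      Matrix.rank (M.submatrix (fun r : {r // rV r ∉ A} => r.1)
          (fun c : {c // cV c ∈ A} => c.1)) +
        Matrix.rank (M.submatrix (fun r : {r // rV r ∉ B} => r.1)
          (fun c : {c // cV c ∈ B} => c.1)) := by
  intro A B
  -- kernel: vectors supported on rows labeled inside Ω
  set K : Finset V → Submodule F (R → F) :=
    fun Ω => LinearMap.ker (LinearMap.funLeft F F (Subtype.val : {r // rV r ∉ Ω} → R)) with hK
  -- span of columns labeled inside Ω
  set W : Finset V → Submodule F (R → F) :=
    fun Ω => Submodule.span F (Mᵀ '' {c | cV c ∈ Ω}) with hW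
  have memK : ∀ (Ω : Finset V) (v : R → F), v ∈ K Ω ↔ ∀ r, rV r ∉ Ω → v r = 0 := by
    intro Ω v
    simp only [hK, LinearMap.mem_ker, funext_iff, LinearMap.funLeft_apply]
    constructor
    · intro h r hr; exact h ⟨r, hr⟩
    · intro h x; exact h x.1 x.2
  -- key identity: rank of the cut submatrix + dim K = dim (W ⊔ K)
  have key : ∀ Ω : Finset V,
      Matrix.rank (M.submatrix (fun r : {r // rV r ∉ Ω} => r.1)
          (fun c : {c // cV c ∈ Ω} => c.1)) + finrank F (K Ω)
        = finrank F ↥(W Ω ⊔ K Ω) := by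
    intro Ω
    rw [Matrix.rank_eq_finrank_span_cols]
    have hcols : Submodule.span F (Set.range (M.submatrix
        (fun r : {r // rV r ∉ Ω} => r.1) (fun c : {c // cV c ∈ Ω} => c.1))ᵀ)
        = (W Ω).map (LinearMap.funLeft F F (Subtype.val : {r // rV r ∉ Ω} → R)) := by
      have : Set.range (M.submatrix
          (fun r : {r // rV r ∉ Ω} => r.1) (fun c : {c // cV c ∈ Ω} => c.1))ᵀ
          = (LinearMap.funLeft F F (Subtype.val : {r // rV r ∉ Ω} → R)) '' (Mᵀ '' {c | cV c ∈ Ω}) := by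
        ext x
        constructor
        · rintro ⟨c, rfl⟩
          exact ⟨Mᵀ c.1, ⟨c.1, c.2, rfl⟩, rfl⟩
        · rintro ⟨y, ⟨c, hc, rfl⟩, rfl⟩
          exact ⟨⟨c, hc⟩, rfl⟩
      rw [this, ← Submodule.map_span]
    rw [show Set.range (M.submatrix (fun r : {r // rV r ∉ Ω} => r.1)
        (fun c : {c // cV c ∈ Ω} => c.1)).col = Set.range (M.submatrix
        (fun r : {r // rV r ∉ Ω} => r.1) (fun c : {c // cV c ∈ Ω} => c.1))ᵀ from rfl, hcols]
    have hmap : (W Ω).map (LinearMap.funLeft F F (Subtype.val : {r // rV r ∉ Ω} → R)) = (W Ω ⊔ K Ω).map (LinearMap.funLeft F F (Subtype.val : {r // rV r ∉ Ω} → R)) := by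
      rw [Submodule.map_sup]
      have : (K Ω).map (LinearMap.funLeft F F (Subtype.val : {r // rV r ∉ Ω} → R)) = ⊥ := by
        rw [eq_bot_iff]
        rintro x ⟨y, hy, rfl⟩
        exact (Submodule.mem_bot F).mpr (LinearMap.mem_ker.mp hy)
      rw [this, sup_bot_eq]
    rw [hmap]
    exact stmt14_finrank_map_ker (LinearMap.funLeft F F (Subtype.val : {r // rV r ∉ Ω} → R)) _ le_sup_right
  -- lattice facts
  have WU : W (A ∪ B) = W A ⊔ W B := by
    rw [hW, ← Submodule.span_union]
    beta_reduce
    congr 1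
    ext x
    simp only [Set.mem_image, Set.mem_union, Set.mem_setOf_eq, Finset.mem_union]
    constructor
    · rintro ⟨c, hc | hc, rfl⟩
      · exact Or.inl ⟨c, hc, rfl⟩
      · exact Or.inr ⟨c, hc, rfl⟩
    · rintro (⟨c, hc, rfl⟩ | ⟨c, hc, rfl⟩)
      · exact ⟨c, Or.inl hc, rfl⟩
      · exact ⟨c, Or.inr hc, rfl⟩
  have WI : W (A ∩ B) ≤ W A ⊓ W B := by
    refine le_inf ?_ ?_ <;>
      exact Submodule.span_mono (Set.image_mono (by intro c hc; simp_all [Finset.mem_inter]))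
  have KI : K (A ∩ B) = K A ⊓ K B := by
    ext v
    simp only [Submodule.mem_inf, memK, Finset.mem_inter]
    constructor
    · intro h
      exact ⟨fun r hr => h r (by tauto), fun r hr => h r (by tauto)⟩
    · rintro ⟨h1, h2⟩ r hr
      rw [not_and_or] at hr
      rcases hr with hr | hr
      · exact h1 r hr
      · exact h2 r hr
  have KU : K (A ∪ B) = K A ⊔ K B := by
    apply le_antisymm
    · intro v hv
      rw [memK] at hv
      rw [Submodule.mem_sup]
      refine ⟨fun r => if rV r ∈ A then v r else 0, ?_,
        fun r => v r - (if rV r ∈ A then v r else 0), ?_, by funext r; simp⟩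
      · rw [memK]; intro r hr; simp [hr]
      · rw [memK]; intro r hr
        by_cases h : rV r ∈ A
        · simp [h]
        · have : v r = 0 := hv r (by simp [Finset.mem_union]; tauto)
          simp [h, this]
    · refine sup_le ?_ ?_
      · intro v hv
        rw [memK] at *
        exact fun r hr => hv r (fun h => hr (Finset.mem_union_left _ h))
      · intro v hv
        rw [memK] at *
        exact fun r hr => hv r (fun h => hr (Finset.mem_union_right _ h))
  have kmod : finrank F ↥(K (A ∪ B)) + finrank F ↥(K (A ∩ B))
      = finrank F ↥(K A) + finrank F ↥(K B) := by
    rw [KU, KI]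
    exact Submodule.finrank_sup_add_finrank_inf_eq _ _
  have h1 : W (A ∪ B) ⊔ K (A ∪ B) = (W A ⊔ K A) ⊔ (W B ⊔ K B) := by
    rw [WU, KU, sup_sup_sup_comm]
  have h2 : W (A ∩ B) ⊔ K (A ∩ B) ≤ (W A ⊔ K A) ⊓ (W B ⊔ K B) := by
    rw [KI]
    exact le_inf
      (sup_le ((WI.trans inf_le_left).trans le_sup_left) (inf_le_left.trans le_sup_right))
      (sup_le ((WI.trans inf_le_right).trans le_sup_left) (inf_le_right.trans le_sup_right))
  have usub : finrank F ↥(W (A ∪ B) ⊔ K (A ∪ B)) + finrank F ↥(W (A ∩ B) ⊔ K (A ∩ B))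
      ≤ finrank F ↥(W A ⊔ K A) + finrank F ↥(W B ⊔ K B) := by
    calc finrank F ↥(W (A ∪ B) ⊔ K (A ∪ B)) + finrank F ↥(W (A ∩ B) ⊔ K (A ∩ B))
        ≤ finrank F ↥((W A ⊔ K A) ⊔ (W B ⊔ K B))
            + finrank F ↥((W A ⊔ K A) ⊓ (W B ⊔ K B)) := by
          rw [h1]
          exact Nat.add_le_add_left (Submodule.finrank_mono h2) _
      _ = finrank F ↥(W A ⊔ K A) + finrank F ↥(W B ⊔ K B) :=
          Submodule.finrank_sup_add_finrank_inf_eq _ _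
  have kU := key (A ∪ B)
  have kI := key (A ∩ B)
  have kA := key A
  have kB := key B
  omega
end

section
/- Let G = (V,E) be a directed graph and V_1, ..., V_k a family of subsets of V, in each of which certain vertices are designated as transmitters, such that: (i) every vertex v is a transmitter in some V_j, (ii) if v is a transmitter in V_j then every out-neighbor of v in G is in V_j, and (iii) if w ∈ V_j is an out-neighbor of some transmitter of V_j, then every in-neighbor of w in G is in V_j and is a transmitter in V_j. Then for every cut Ω ⊆ V, every (undirected) connected component of the cut graph G_Ω = (V, {(u,v) ∈ E : u ∈ Ω, v ∉ Ω}) is contained in some V_j. -/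
/-- under the node-grouping closure conditions (every node is a
transmitter in some group; out-neighbors of transmitters belong to the group;
in-neighbors of receivers belong to the group as transmitters), every connected
component of any cut graph G_Ω is contained in some group V_j. -/
theorem stmt17 {V : Type*} (E : V → V → Prop) {k : ℕ}
    (Vs : Fin k → Set V) (Tx : Fin k → Set V)
    (hTx : ∀ j, Tx j ⊆ Vs j)
    (h1 : ∀ v, ∃ j, v ∈ Tx j)
    (h2 : ∀ j, ∀ i ∈ Tx j, ∀ w, E i w → w ∈ Vs j)
    (h3 : ∀ j, ∀ w ∈ Vs j, (∃ i ∈ Tx j, E i w) → ∀ u, E u w → u ∈ Tx j) :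
    ∀ Ω : Set V, ∀ u,
      (∃ w, (E u w ∧ u ∈ Ω ∧ w ∉ Ω) ∨ (E w u ∧ w ∈ Ω ∧ u ∉ Ω)) →
      ∃ j, ∀ v,
        Relation.ReflTransGen
          (fun x y => (E x y ∧ x ∈ Ω ∧ y ∉ Ω) ∨ (E y x ∧ y ∈ Ω ∧ x ∉ Ω)) u v →
        v ∈ Vs j := by
  intro Ω u ⟨w, hw⟩
  -- The invariant: a vertex in Ω is a transmitter of group j,
  -- a vertex outside Ω is a receiver (in Vs j, with an in-edge from Tx j).
  have key : ∀ j : Fin k,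
      ((u ∈ Ω → u ∈ Tx j) ∧ (u ∉ Ω → u ∈ Vs j ∧ ∃ i ∈ Tx j, E i u)) →
      ∀ v, Relation.ReflTransGen
          (fun x y => (E x y ∧ x ∈ Ω ∧ y ∉ Ω) ∨ (E y x ∧ y ∈ Ω ∧ x ∉ Ω)) u v →
        v ∈ Vs j := by
    intro j hbase v hv
    have main : (v ∈ Ω → v ∈ Tx j) ∧ (v ∉ Ω → v ∈ Vs j ∧ ∃ i ∈ Tx j, E i v) := by
      induction hv with
      | refl => exact hbase
      | tail hab hstep ih =>
        rename_i b c
        rcases hstep with ⟨hEbc, hbΩ, hcΩ⟩ | ⟨hEcb, hcΩ, hbΩ⟩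
        · -- b ∈ Ω transmitter, c ∉ Ω receiver
          have hb : b ∈ Tx j := ih.1 hbΩ
          exact ⟨fun hc => absurd hc hcΩ,
            fun _ => ⟨h2 j b hb c hEbc, b, hb, hEbc⟩⟩
        · -- b ∉ Ω receiver, c ∈ Ω transmitter via h3
          obtain ⟨hbVs, hbrecv⟩ := ih.2 hbΩ
          have hc : c ∈ Tx j := h3 j b hbVs hbrecv c hEcb
          exact ⟨fun _ => hc, fun hcΩ' => absurd hcΩ hcΩ'⟩
    by_cases hv' : v ∈ Ω
    · exact hTx j (main.1 hv')
    · exact (main.2 hv').1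
  rcases hw with ⟨hEuw, huΩ, hwΩ⟩ | ⟨hEwu, hwΩ, huΩ⟩
  · obtain ⟨j, hj⟩ := h1 u
    exact ⟨j, key j ⟨fun _ => hj, fun h => absurd huΩ h⟩⟩
  · obtain ⟨j, hj⟩ := h1 w
    exact ⟨j, key j ⟨fun h => absurd h huΩ,
      fun _ => ⟨h2 j w hj u hEwu, w, hj, hEwu⟩⟩⟩
end
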